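/- arXiv:1505.06075 — 2 statements merged into one kernel-verified Lean document; each statement's English description precedes it below -/
import Mathlib

section
/- Third derivative of the Ornstein–Uhlenbeck semigroup via Gaussian integration by parts: let γ denote the standard Gaussian measure on ℝ and for t ≥ 0 define P_tF(x) = ∫ F(e^{-t}x + √(1−e^{-2t}) y) dγ(y). If F : ℝ → ℝ is twice continuously differentiable with F, F′, F″ bounded, then for every t > 0 the function P_tF is three times differentiable and (P_tF)‴(x) = (e^{-3t}/√(1−e^{-2t})) ∫ F″(e^{-t}x + √(1−e^{-2t}) y) · y dγ(y) for all x ∈ ℝ. -/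
open MeasureTheory Real ProbabilityTheory

/-- The Ornstein–Uhlenbeck (Mehler) semigroup:
`P_t F (x) = ∫ F(e^{-t} x + √(1 − e^{-2t}) y) dγ(y)`. -/
noncomputable def ouSemigroup (t : ℝ) (F : ℝ → ℝ) (x : ℝ) : ℝ :=
  ∫ y, F (Real.exp (-t) * x + Real.sqrt (1 - Real.exp (-2 * t)) * y) ∂(gaussianReal 0 1)

/-!
Write `P_t F(x) = ∫ F(a x + s y) dγ(y)` with `a = e^{-t}` and `s = √(1 - e^{-2t})`. Two
differentiations under the integral sign, dominated by the bounds on `F'` and `F''`, give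
`(P_t F)'' = a² ∫ F''(a x + s y) dγ(y)`. For the third derivative no bound on `F'''` is
available; instead the substitution `y ↦ y + (a/s)(x - x₀)` moves the dependence on `x` into the
mean of the Gaussian, and differentiating the Gaussian density in its mean produces the factor
`y` (this is Gaussian integration by parts), with chain-rule factor `a/s`.
-/

open scoped NNReal

lemma hasDerivAt_gaussianPDFReal_mean (v : ℝ≥0) (x μ : ℝ) :
    HasDerivAt (fun μ => gaussianPDFReal μ v x) ((x - μ) / v * gaussianPDFReal μ v x) μ := by
  have h : HasDerivAt (fun μ : ℝ => -(x - μ) ^ 2 / (2 * v)) ((x - μ) / v) μ := by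
    have := ((((hasDerivAt_id' μ).const_sub x).pow 2).neg).div_const (2 * (v : ℝ))
    exact this.congr_deriv (by ring)
  refine (h.exp.const_mul (√(2 * π * v))⁻¹).congr_deriv ?_
  simp only [gaussianPDFReal]
  ring

/-- With `w = x - m` and `d = μ - m`, this dominates `|x - μ| e^{-(x-μ)²/(2v)}` uniformly over the
means `μ` within distance `1` of `m`. -/
lemma abs_sub_mul_exp_neg_sq_le {v : ℝ} (hv : 0 < v) {d : ℝ} (hd : |d| ≤ 1) (w : ℝ) :
    |w - d| * exp (-(w - d) ^ 2 / (2 * v))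
      ≤ exp (1 / (2 * v)) * ((|w| + 1) * exp (-(1 / (4 * v)) * w ^ 2)) := by
  have hsq : w ^ 2 / 2 - 1 ≤ (w - d) ^ 2 := by
    nlinarith [sq_nonneg (w - 2 * d), sq_abs d, abs_nonneg d]
  have hexp :
      exp (-(w - d) ^ 2 / (2 * v)) ≤ exp (1 / (2 * v)) * exp (-(1 / (4 * v)) * w ^ 2) := by
    rw [← exp_add, exp_le_exp]
    have : -(w - d) ^ 2 / (2 * v) ≤ -(w ^ 2 / 2 - 1) / (2 * v) := by gcongr
    convert this using 1
    field_simp; ring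
  calc |w - d| * exp (-(w - d) ^ 2 / (2 * v))
      ≤ (|w| + 1) * (exp (1 / (2 * v)) * exp (-(1 / (4 * v)) * w ^ 2)) := by
        gcongr
        exact (abs_sub _ _).trans (by linarith)
    _ = _ := by ring

lemma integrable_abs_add_one_mul_exp_neg_mul_sq {b : ℝ} (hb : 0 < b) :
    Integrable fun x : ℝ => (|x| + 1) * exp (-b * x ^ 2) := by
  simp only [add_mul, one_mul]
  refine Integrable.add ?_ (integrable_exp_neg_mul_sq hb)
  simpa [abs_mul, abs_of_pos (exp_pos _)] using (integrable_mul_exp_neg_mul_sq hb).norm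

lemma hasDerivAt_integral_gaussianReal_mean {f : ℝ → ℝ} (hf : Measurable f)
    (hfb : ∃ C, ∀ x, |f x| ≤ C) {v : ℝ≥0} (hv : v ≠ 0) (m : ℝ) :
    HasDerivAt (fun μ => ∫ x, f x ∂gaussianReal μ v)
      ((v : ℝ)⁻¹ * ∫ x, f x * (x - m) ∂gaussianReal m v) m := by
  obtain ⟨C, hC⟩ := hfb
  have hv' : (0 : ℝ) < v := by positivity
  simp_rw [integral_gaussianReal_eq_integral_smul hv, smul_eq_mul]
  set K := C * ((√(2 * π * v))⁻¹ * (v : ℝ)⁻¹ * exp (1 / (2 * v)))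
  have hderiv := hasDerivAt_integral_of_dominated_loc_of_deriv_le
    (F := fun μ x => gaussianPDFReal μ v x * f x)
    (F' := fun μ x => (x - μ) / v * gaussianPDFReal μ v x * f x)
    (bound := fun x => K * ((|x - m| + 1) * exp (-(1 / (4 * v)) * (x - m) ^ 2)))
    (Metric.ball_mem_nhds m one_pos)
    (.of_forall fun μ => ((measurable_gaussianPDFReal μ v).mul hf).aestronglyMeasurable)
    ((integrable_gaussianPDFReal m v).mul_bdd hf.aestronglyMeasurable
      (.of_forall fun x => by simpa using hC x))
    (by fun_prop)
    (.of_forall fun x μ hμ => by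
      have hd : |μ - m| ≤ 1 := (Metric.mem_ball.1 hμ).le
      have key := abs_sub_mul_exp_neg_sq_le hv' hd (x - m)
      rw [sub_sub_sub_cancel_right] at key
      rw [Real.norm_eq_abs, abs_mul, abs_mul, abs_div, abs_of_pos hv',
        abs_of_nonneg (gaussianPDFReal_nonneg _ _ _), gaussianPDFReal]
      calc |x - μ| / v * ((√(2 * π * v))⁻¹ * exp (-(x - μ) ^ 2 / (2 * v))) * |f x|
          = (√(2 * π * v))⁻¹ * (v : ℝ)⁻¹ * (|x - μ| * exp (-(x - μ) ^ 2 / (2 * v))) * |f x| := by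
            ring
        _ ≤ (√(2 * π * v))⁻¹ * (v : ℝ)⁻¹
              * (exp (1 / (2 * v)) * ((|x - m| + 1) * exp (-(1 / (4 * v)) * (x - m) ^ 2))) * C := by
            gcongr
            exact hC x
        _ = _ := by ring)
    ((integrable_abs_add_one_mul_exp_neg_mul_sq (by positivity)).comp_sub_right m |>.const_mul K)
    (.of_forall fun x μ _ => (hasDerivAt_gaussianPDFReal_mean v x μ).mul_const (f x))
  refine hderiv.2.congr_deriv ?_
  rw [← integral_const_mul]
  congr 1 with x
  ring

noncomputable def affineIntegral (μ : Measure ℝ) (a s : ℝ) (G : ℝ → ℝ) (x : ℝ) : ℝ :=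
  ∫ y, G (a * x + s * y) ∂μ

lemma affineIntegral_gaussianReal_eq_integral_shift {G : ℝ → ℝ} (hG : Measurable G) (a : ℝ)
    {s : ℝ} (hs : s ≠ 0) (x₀ x : ℝ) :
    affineIntegral (gaussianReal 0 1) a s G x
      = ∫ y, G (a * x₀ + s * y) ∂gaussianReal (a / s * (x - x₀)) 1 := by
  rw [← zero_add (a / s * (x - x₀)), ← gaussianReal_map_add_const,
    integral_map (f := fun y => G (a * x₀ + s * y)) (measurable_add_const _).aemeasurable
      (hG.comp (by fun_prop)).aestronglyMeasurable, affineIntegral]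
  congr 1 with y
  congr 1
  field_simp
  ring

lemma hasDerivAt_affineIntegral_gaussianReal {G : ℝ → ℝ} (hG : Measurable G)
    (hGb : ∃ C, ∀ x, |G x| ≤ C) (a : ℝ) {s : ℝ} (hs : s ≠ 0) (x : ℝ) :
    HasDerivAt (affineIntegral (gaussianReal 0 1) a s G)
      (a / s * ∫ y, G (a * x + s * y) * y ∂gaussianReal 0 1) x := by
  obtain ⟨C, hC⟩ := hGb
  have hmean := hasDerivAt_integral_gaussianReal_mean (f := fun y => G (a * x + s * y))
    (by fun_prop) ⟨C, fun y => hC _⟩ one_ne_zero 0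
  have hshift : HasDerivAt (fun x' => a / s * (x' - x)) (a / s) x := by
    simpa using ((hasDerivAt_id x).sub_const x).const_mul (a / s)
  rw [funext (affineIntegral_gaussianReal_eq_integral_shift hG a hs x)]
  refine (hmean.comp_of_eq x hshift (by simp)).congr_deriv ?_
  simp only [NNReal.coe_one, inv_one, sub_zero, one_mul]
  ring

lemma hasDerivAt_affineIntegral {μ : Measure ℝ} [IsFiniteMeasure μ] {G : ℝ → ℝ}
    (hG : Differentiable ℝ G) (hGb : ∃ C, ∀ x, |G x| ≤ C) (hG'b : ∃ C, ∀ x, |deriv G x| ≤ C)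
    (a s x : ℝ) :
    HasDerivAt (affineIntegral μ a s G) (a * affineIntegral μ a s (deriv G) x) x := by
  show HasDerivAt (fun x => ∫ y, G (a * x + s * y) ∂μ) (a * ∫ y, deriv G (a * x + s * y) ∂μ) x
  obtain ⟨D, hD⟩ := hGb
  obtain ⟨C, hC⟩ := hG'b
  have hderiv := hasDerivAt_integral_of_dominated_loc_of_deriv_le (μ := μ) (x₀ := x)
    (F := fun x y => G (a * x + s * y)) (F' := fun x y => a * deriv G (a * x + s * y))
    (bound := fun _ => |a| * C) (Metric.ball_mem_nhds x one_pos)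
    (.of_forall fun x => (hG.continuous.comp (by fun_prop)).aestronglyMeasurable)
    ((integrable_const D).mono' (hG.continuous.comp (by fun_prop)).aestronglyMeasurable
      (.of_forall fun y => hD _))
    (((measurable_deriv G).comp (by fun_prop)).const_mul a).aestronglyMeasurable
    (.of_forall fun y x' _ => by
      rw [Real.norm_eq_abs, abs_mul]
      exact mul_le_mul_of_nonneg_left (hC _) (abs_nonneg a))
    (integrable_const _)
    (.of_forall fun y x' _ => by
      have hin : HasDerivAt (fun x : ℝ => a * x + s * y) a x' := by
        simpa using ((hasDerivAt_id x').const_mul a).add_const (s * y)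
      exact ((hG _).hasDerivAt.comp x' hin).congr_deriv (mul_comm _ _))
  simpa only [integral_const_mul] using hderiv.2

lemma continuous_integral_comp_affine_mul_id {μ : Measure ℝ} (hμ : Integrable id μ) {G : ℝ → ℝ}
    (hG : Continuous G) (hGb : ∃ C, ∀ x, |G x| ≤ C) (a s : ℝ) :
    Continuous fun x => ∫ y, G (a * x + s * y) * y ∂μ := by
  obtain ⟨C, hC⟩ := hGb
  refine continuous_of_dominated (bound := fun y => C * |y|)
    (fun x => (by fun_prop : Continuous fun y => G (a * x + s * y) * y).aestronglyMeasurable)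
    (fun x => .of_forall fun y => ?_) (hμ.abs.const_mul C) (.of_forall fun y => by fun_prop)
  rw [Real.norm_eq_abs, abs_mul]
  exact mul_le_mul_of_nonneg_right (hC _) (abs_nonneg y)

lemma deriv_affineIntegral {μ : Measure ℝ} [IsFiniteMeasure μ] {G : ℝ → ℝ}
    (hG : Differentiable ℝ G) (hGb : ∃ C, ∀ x, |G x| ≤ C) (hG'b : ∃ C, ∀ x, |deriv G x| ≤ C)
    (a s : ℝ) :
    deriv (affineIntegral μ a s G) = fun x => a * affineIntegral μ a s (deriv G) x :=
  funext fun x => (hasDerivAt_affineIntegral hG hGb hG'b a s x).deriv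

lemma contDiff_succ_affineIntegral {μ : Measure ℝ} [IsFiniteMeasure μ] {G : ℝ → ℝ}
    (hG : Differentiable ℝ G) (hGb : ∃ C, ∀ x, |G x| ≤ C) (hG'b : ∃ C, ∀ x, |deriv G x| ≤ C)
    (a s : ℝ) {n : ℕ} (h : ContDiff ℝ n (affineIntegral μ a s (deriv G))) :
    ContDiff ℝ (n + 1) (affineIntegral μ a s G) := by
  rw [contDiff_succ_iff_deriv, deriv_affineIntegral hG hGb hG'b]
  exact ⟨fun x => (hasDerivAt_affineIntegral hG hGb hG'b a s x).differentiableAt, by simp,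
    contDiff_const.mul h⟩

lemma contDiff_one_affineIntegral_gaussianReal {G : ℝ → ℝ} (hG : Continuous G)
    (hGb : ∃ C, ∀ x, |G x| ≤ C) (a : ℝ) {s : ℝ} (hs : s ≠ 0) :
    ContDiff ℝ 1 (affineIntegral (gaussianReal 0 1) a s G) := by
  have hderiv := hasDerivAt_affineIntegral_gaussianReal hG.measurable hGb a hs
  rw [contDiff_one_iff_deriv, funext fun x => (hderiv x).deriv]
  have hγ : Integrable id (gaussianReal 0 1) := (memLp_id_gaussianReal 1).integrable (by simp)
  exact ⟨fun x => (hderiv x).differentiableAt,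
    continuous_const.mul (continuous_integral_comp_affine_mul_id hγ hG hGb a s)⟩

/-- **Third derivative of the Ornstein–Uhlenbeck semigroup** via Gaussian integration by
parts: if `F ∈ C²_b`, then for `t > 0`, `P_t F` is three times differentiable with
`(P_t F)‴(x) = (e^{-3t}/√(1−e^{-2t})) ∫ F″(e^{-t}x + √(1−e^{-2t}) y) y dγ(y)`. -/
theorem ouSemigroup_third_deriv
    (F : ℝ → ℝ) (hF : ContDiff ℝ 2 F)
    (hFb : ∃ C, ∀ x, |F x| ≤ C)
    (hF'b : ∃ C, ∀ x, |deriv F x| ≤ C)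
    (hF''b : ∃ C, ∀ x, |deriv (deriv F) x| ≤ C)
    (t : ℝ) (ht : 0 < t) :
    ContDiff ℝ 3 (fun z => ouSemigroup t F z) ∧
    ∀ x : ℝ, iteratedDeriv 3 (fun z => ouSemigroup t F z) x
      = Real.exp (-3 * t) / Real.sqrt (1 - Real.exp (-2 * t)) *
        ∫ y, deriv (deriv F) (Real.exp (-t) * x + Real.sqrt (1 - Real.exp (-2 * t)) * y) * y
          ∂(gaussianReal 0 1) := by
  set a := exp (-t)
  set s := √(1 - exp (-2 * t))
  have hs : s ≠ 0 := (sqrt_pos.2 (by linarith [exp_lt_one_iff.2 (by linarith : -2 * t < 0)])).ne'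
  have hF₁ : Differentiable ℝ F := hF.differentiable (by norm_num)
  have hF₂ : Differentiable ℝ (deriv F) := hF.differentiable_deriv_two
  have hF₃ : Continuous (deriv (deriv F)) := (ContDiff.deriv' (n := 1) hF).continuous_deriv_one
  change ContDiff ℝ 3 (affineIntegral (gaussianReal 0 1) a s F) ∧
    ∀ x, iteratedDeriv 3 (affineIntegral (gaussianReal 0 1) a s F) x = _
  refine ⟨contDiff_succ_affineIntegral (n := 2) hF₁ hFb hF'b a s
    (contDiff_succ_affineIntegral (n := 1) hF₂ hF'b hF''b a s
      (contDiff_one_affineIntegral_gaussianReal hF₃ hF''b a hs)), fun x => ?_⟩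
  rw [iteratedDeriv_succ, iteratedDeriv_succ, iteratedDeriv_one]
  simp only [deriv_affineIntegral hF₁ hFb hF'b,
    deriv_affineIntegral hF₂ hF'b hF''b, deriv_const_mul_field']
  rw [(hasDerivAt_affineIntegral_gaussianReal hF₃.measurable hF''b a hs x).deriv,
    show -3 * t = (3 : ℕ) * -t by push_cast; ring, exp_nat_mul]
  ring
end

section
/- Taylor–Stein identity for the normalized Poisson variable: let Z_λ be a Poisson random variable with parameter λ > 0, Ẑ_λ = (Z_λ − λ)/√λ, and let ψ : ℝ → ℝ be three times continuously differentiable with ψ, ψ′, ψ″, ψ‴ bounded. Then E[Ẑ_λ ψ′(Ẑ_λ) − ψ″(Ẑ_λ)] = λ^{-1/2} ∫₀¹ (1−r) E[ψ‴(Ẑ_λ + r/√λ)] dr. -/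
/-!
The Poisson Stein identity `E[Z g(Z)] = λ E[g(Z + 1)]` turns `E[Ẑ g(Ẑ)]` into
`√λ E[g(Ẑ + 1/√λ) - g(Ẑ)]`. For `g = ψ′`, subtracting `E[ψ″(Ẑ)]` leaves `√λ` times the expected
first-order Taylor remainder of `ψ′` with step `1/√λ`; writing that remainder in integral form
and exchanging the expectation with the `dr`-integral (Fubini, `ψ‴` being bounded) gives the
right-hand side.
-/

open MeasureTheory Real ProbabilityTheory
open scoped NNReal Nat

lemma tsum_eq_tsum_add_one_of_apply_zero {G : Type*} [AddCommGroup G] [TopologicalSpace G]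
    [IsTopologicalAddGroup G] [T2Space G] {f : ℕ → G} (hf : f 0 = 0) :
    ∑' n, f n = ∑' n, f (n + 1) := by
  by_cases hs : Summable f
  · rw [hs.tsum_eq_zero_add, hf, zero_add]
  · rw [tsum_eq_zero_of_not_summable hs,
      tsum_eq_zero_of_not_summable ((summable_nat_add_iff 1).not.mpr hs)]

lemma sub_sub_mul_deriv_eq_integral_iteratedDeriv_two {f : ℝ → ℝ} (hf : ContDiff ℝ 2 f)
    (a h : ℝ) :
    f (a + h) - f a - h * deriv f a
      = h ^ 2 * ∫ t in (0 : ℝ)..1, (1 - t) * iteratedDeriv 2 f (a + t * h) := by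
  have taylor := map_add_eq_sum_add_integral_iteratedFDeriv (n := 1) (x := a) (y := h)
    fun t _ ↦ hf.contDiffAt
  simp only [iteratedFDeriv_apply_eq_iteratedDeriv_mul_prod, Finset.sum_range_succ,
    Finset.sum_range_zero, Fin.prod_const, smul_eq_mul, iteratedDeriv_zero, iteratedDeriv_one,
    Nat.factorial_zero, Nat.factorial_one, Nat.cast_one, inv_one, one_mul, pow_zero, pow_one,
    zero_add, Nat.reduceAdd, mul_left_comm _ (h ^ 2), intervalIntegral.integral_const_mul]
    at taylor
  rw [taylor]
  ring

lemma integral_intervalIntegral_mul_swap {α : Type*} [MeasurableSpace α] {μ : Measure α}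
    [IsFiniteMeasure μ] {w : ℝ → ℝ} {a b : ℝ} (hw : IntervalIntegrable w volume a b)
    {F : α → ℝ → ℝ} (hF : Measurable (Function.uncurry F)) {C : ℝ} (hC : ∀ x r, |F x r| ≤ C) :
    ∫ x, (∫ r in a..b, w r * F x r) ∂μ = ∫ r in a..b, w r * ∫ x, F x r ∂μ := by
  simp_rw [← integral_const_mul]
  refine (intervalIntegral_integral_swap ?_).symm
  exact (hw.def'.comp_fst μ).mul_bdd (hF.comp measurable_swap).aestronglyMeasurable
    (ae_of_all _ fun p ↦ hC _ _)

namespace ProbabilityTheory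

lemma poissonMeasure_real_singleton_succ_mul (r : ℝ≥0) (n : ℕ) :
    Po(r).real {n + 1} * (n + 1) = r * Po(r).real {n} := by
  simp only [poissonMeasure_real_singleton, Nat.factorial_succ, pow_succ, Nat.cast_mul,
    Nat.cast_succ]
  field_simp

lemma integrable_natCast_poissonMeasure (r : ℝ≥0) :
    Integrable (fun n : ℕ ↦ (n : ℝ)) Po(r) := by
  have summable := (hasSum_one_poissonMeasure r).summable.mul_left (r : ℝ)
  simp only [integrable_poissonMeasure_iff, Real.norm_natCast,
    ← poissonMeasure_real_singleton] at summable ⊢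
  refine (summable_nat_add_iff 1).mp (summable.congr fun n ↦ ?_)
  rw [Nat.cast_succ, poissonMeasure_real_singleton_succ_mul]

lemma integral_natCast_mul_poissonMeasure (r : ℝ≥0) (g : ℕ → ℝ) :
    ∫ n, (n : ℝ) * g n ∂Po(r) = r * ∫ n, g (n + 1) ∂Po(r) := by
  simp only [integral_poissonMeasure, ← poissonMeasure_real_singleton, smul_eq_mul]
  rw [← tsum_mul_left, tsum_eq_tsum_add_one_of_apply_zero (by simp)]
  congr 1 with n
  push_cast
  linear_combination g (n + 1) * poissonMeasure_real_singleton_succ_mul r n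

lemma integral_mul_comp_normalized_poissonMeasure (r : ℝ≥0) {g : ℝ → ℝ}
    (hg : ∃ C, ∀ x, |g x| ≤ C) :
    ∫ n, ((n : ℝ) - r) / √r * g (((n : ℝ) - r) / √r) ∂Po(r)
      = √r * ∫ n, (g (((n : ℝ) - r) / √r + (√r)⁻¹) - g (((n : ℝ) - r) / √r)) ∂Po(r) := by
  obtain ⟨C, hC⟩ := hg
  rcases eq_or_ne r 0 with rfl | hr
  · simp
  set s := √(r : ℝ)
  set X : ℕ → ℝ := fun n ↦ ((n : ℝ) - r) / s
  have hs : s ≠ 0 := Real.sqrt_ne_zero'.mpr (by positivity)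
  have hss : s * s = r := Real.mul_self_sqrt r.coe_nonneg
  have hX_succ (n : ℕ) : X (n + 1) = X n + s⁻¹ := by
    simp only [X]; push_cast; field_simp; ring
  have integrable_comp : Integrable (fun n ↦ g (X n)) Po(r) :=
    .of_bound .of_discrete C (ae_of_all _ fun n ↦ hC _)
  have integrable_shift : Integrable (fun n ↦ g (X n + s⁻¹)) Po(r) :=
    .of_bound .of_discrete C (ae_of_all _ fun n ↦ hC _)
  have integrable_mul : Integrable (fun n : ℕ ↦ (n : ℝ) * g (X n)) Po(r) :=
    (integrable_natCast_poissonMeasure r).mul_bdd .of_discrete (ae_of_all _ fun n ↦ hC _)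
  calc ∫ n, X n * g (X n) ∂Po(r)
      = ∫ n, (s⁻¹ * ((n : ℝ) * g (X n)) - s * g (X n)) ∂Po(r) := by
        congr 1 with n
        simp only [X]
        rw [← hss]
        field_simp
    _ = s⁻¹ * (r * ∫ n, g (X n + s⁻¹) ∂Po(r)) - s * ∫ n, g (X n) ∂Po(r) := by
        rw [integral_sub (integrable_mul.const_mul _) (integrable_comp.const_mul s),
          integral_const_mul, integral_const_mul,
          integral_natCast_mul_poissonMeasure r (fun n ↦ g (X n))]
        simp only [hX_succ]
    _ = s * ∫ n, (g (X n + s⁻¹) - g (X n)) ∂Po(r) := by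
        rw [integral_sub integrable_shift integrable_comp, ← hss]
        field_simp

lemma integral_mul_comp_sub_comp_normalized_poissonMeasure {r : ℝ≥0} (hr : 0 < r)
    {g g' : ℝ → ℝ} (hg : ∃ C, ∀ x, |g x| ≤ C) (hg' : ∃ C, ∀ x, |g' x| ≤ C) :
    ∫ n, (((n : ℝ) - r) / √r * g (((n : ℝ) - r) / √r) - g' (((n : ℝ) - r) / √r)) ∂Po(r)
      = √r * ∫ n, (g (((n : ℝ) - r) / √r + (√r)⁻¹) - g (((n : ℝ) - r) / √r)
          - (√r)⁻¹ * g' (((n : ℝ) - r) / √r)) ∂Po(r) := by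
  set s := √(r : ℝ)
  set X : ℕ → ℝ := fun n ↦ ((n : ℝ) - r) / s
  have stein : ∫ n, X n * g (X n) ∂Po(r) = s * ∫ n, (g (X n + s⁻¹) - g (X n)) ∂Po(r) :=
    integral_mul_comp_normalized_poissonMeasure r hg
  obtain ⟨C, hC⟩ := hg
  obtain ⟨C', hC'⟩ := hg'
  have hs : s ≠ 0 := Real.sqrt_ne_zero'.mpr (by exact_mod_cast hr)
  have integrable_comp {f : ℝ → ℝ} {C : ℝ} (hf : ∀ x, |f x| ≤ C) :
      Integrable (fun n ↦ f (X n)) Po(r) :=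
    .of_bound .of_discrete C (ae_of_all _ fun n ↦ hf _)
  have integrable_X_mul : Integrable (fun n ↦ X n * g (X n)) Po(r) :=
    (((integrable_natCast_poissonMeasure r).sub (integrable_const _)).div_const s).mul_bdd
      .of_discrete (ae_of_all _ fun n ↦ hC _)
  have integrable_increment : Integrable (fun n ↦ g (X n + s⁻¹) - g (X n)) Po(r) :=
    (integrable_comp (f := fun x ↦ g (x + s⁻¹)) fun x ↦ hC _).sub (integrable_comp hC)
  rw [integral_sub integrable_X_mul (integrable_comp hC'), stein,
    integral_sub integrable_increment ((integrable_comp hC').const_mul _), integral_const_mul,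
    mul_sub, mul_inv_cancel_left₀ hs]

end ProbabilityTheory

theorem taylor_stein_identity_normalized_poisson_general
    (lam : NNReal) (hlam : 0 < lam) (ψ : ℝ → ℝ) (hψ : ContDiff ℝ 3 ψ)
    (hb1 : ∃ C, ∀ x, |deriv ψ x| ≤ C)
    (hb2 : ∃ C, ∀ x, |iteratedDeriv 2 ψ x| ≤ C)
    (hb3 : ∃ C, ∀ x, |iteratedDeriv 3 ψ x| ≤ C) :
    ∫ n, (((n : ℝ) - lam) / Real.sqrt lam * deriv ψ (((n : ℝ) - lam) / Real.sqrt lam)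
        - iteratedDeriv 2 ψ (((n : ℝ) - lam) / Real.sqrt lam)) ∂(poissonMeasure lam)
      = (Real.sqrt lam)⁻¹ *
          ∫ r in (0 : ℝ)..1, (1 - r) *
            ∫ n, iteratedDeriv 3 ψ (((n : ℝ) - lam) / Real.sqrt lam + r / Real.sqrt lam)
              ∂(poissonMeasure lam) := by
  obtain ⟨C3, hC3⟩ := hb3
  set s := √(lam : ℝ)
  set X : ℕ → ℝ := fun n ↦ ((n : ℝ) - lam) / s
  have hs : s ≠ 0 := Real.sqrt_ne_zero'.mpr (by exact_mod_cast hlam)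
  have taylor (n : ℕ) :
      deriv ψ (X n + s⁻¹) - deriv ψ (X n) - s⁻¹ * iteratedDeriv 2 ψ (X n)
        = s⁻¹ ^ 2 * ∫ r in (0 : ℝ)..1, (1 - r) * iteratedDeriv 3 ψ (X n + r / s) := by
    simpa only [iteratedDeriv_succ' (n := 2), iteratedDeriv_succ' (n := 1), iteratedDeriv_one,
      div_eq_mul_inv] using sub_sub_mul_deriv_eq_integral_iteratedDeriv_two hψ.deriv' (X n) s⁻¹
  have measurable_integrand : Measurable fun p : ℕ × ℝ ↦ iteratedDeriv 3 ψ (X p.1 + p.2 / s) :=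
    have measurable_X : Measurable X := measurable_from_nat
    (hψ.continuous_iteratedDeriv 3 le_rfl).measurable.comp (by fun_prop)
  calc ∫ n, (X n * deriv ψ (X n) - iteratedDeriv 2 ψ (X n)) ∂Po(lam)
      = s * ∫ n, (deriv ψ (X n + s⁻¹) - deriv ψ (X n) - s⁻¹ * iteratedDeriv 2 ψ (X n))
          ∂Po(lam) :=
        integral_mul_comp_sub_comp_normalized_poissonMeasure hlam hb1 hb2
    _ = s * ∫ n, s⁻¹ ^ 2 * (∫ r in (0 : ℝ)..1, (1 - r) * iteratedDeriv 3 ψ (X n + r / s))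
          ∂Po(lam) := by
        simp_rw [taylor]
    _ = s⁻¹ * ∫ r in (0 : ℝ)..1, (1 - r) * ∫ n, iteratedDeriv 3 ψ (X n + r / s) ∂Po(lam) := by
        rw [integral_const_mul, integral_intervalIntegral_mul_swap
          (w := fun r ↦ 1 - r) (F := fun n r ↦ iteratedDeriv 3 ψ (X n + r / s))
          ((continuous_const.sub continuous_id).intervalIntegrable 0 1) measurable_integrand
          (fun _ _ ↦ hC3 _)]
        field_simp

/-- **Taylor–Stein identity for the normalized Poisson variable**: for `Z_λ` Poisson of
parameter `λ > 0`, `Ẑ_λ = (Z_λ − λ)/√λ`, and `ψ ∈ C³` with `ψ, ψ′, ψ″, ψ‴` bounded,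
`E[Ẑ_λ ψ′(Ẑ_λ) − ψ″(Ẑ_λ)] = λ^{-1/2} ∫₀¹ (1−r) E[ψ‴(Ẑ_λ + r/√λ)] dr`. -/
theorem taylor_stein_identity_normalized_poisson
    (lam : NNReal) (hlam : 0 < lam) (ψ : ℝ → ℝ) (hψ : ContDiff ℝ 3 ψ)
    (hb0 : ∃ C, ∀ x, |ψ x| ≤ C)
    (hb1 : ∃ C, ∀ x, |deriv ψ x| ≤ C)
    (hb2 : ∃ C, ∀ x, |iteratedDeriv 2 ψ x| ≤ C)
    (hb3 : ∃ C, ∀ x, |iteratedDeriv 3 ψ x| ≤ C) :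
    ∫ n, (((n : ℝ) - lam) / Real.sqrt lam * deriv ψ (((n : ℝ) - lam) / Real.sqrt lam)
        - iteratedDeriv 2 ψ (((n : ℝ) - lam) / Real.sqrt lam)) ∂(poissonMeasure lam)
      = (Real.sqrt lam)⁻¹ *
          ∫ r in (0 : ℝ)..1, (1 - r) *
            ∫ n, iteratedDeriv 3 ψ (((n : ℝ) - lam) / Real.sqrt lam + r / Real.sqrt lam)
              ∂(poissonMeasure lam) :=
  taylor_stein_identity_normalized_poisson_general lam hlam ψ hψ hb1 hb2 hb3
end
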